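/- Let n ≥ 2, f > 0, and λ₁ ≥ ... ≥ λₙ with Σᵢ arctan(λᵢ/f) ≥ (n-2)π/2 and λₙ < 0. Then -f/λₙ ≥ Σᵢ₌₁^{n-1} f/λᵢ. -/

import Mathlib

open Real Finset

/-!
Put `φᵢ = π/2 - arctan(λᵢ/f) > 0` for `i < n - 1`. The arctan hypothesis says exactly that
`∑ φᵢ ≤ π/2 + arctan(λₙ/f)`, and the right-hand side lies in `(0, π/2)` since `λₙ < 0`.
As `tan` is superadditive on nonnegative angles with sum below `π/2` and increasing there,
`∑ f/λᵢ = ∑ tan φᵢ ≤ tan (∑ φᵢ) ≤ tan (π/2 + arctan(λₙ/f)) = -f/λₙ`.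
-/

namespace Real

theorem tan_add_tan_le_tan_add {a b : ℝ} (ha : 0 ≤ a) (hb : 0 ≤ b) (hab : a + b < π / 2) :
    tan a + tan b ≤ tan (a + b) := by
  have hca : 0 < cos a := cos_pos_of_mem_Ioo ⟨by linarith [pi_pos], by linarith⟩
  have hcb : 0 < cos b := cos_pos_of_mem_Ioo ⟨by linarith [pi_pos], by linarith⟩
  have hcab : 0 < cos (a + b) := cos_pos_of_mem_Ioo ⟨by linarith [pi_pos], hab⟩
  have hsab : 0 ≤ sin (a + b) := sin_nonneg_of_nonneg_of_le_pi (by linarith) (by linarith)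
  have hcos : cos (a + b) ≤ cos a * cos b := by
    rw [cos_add]
    have := mul_nonneg (sin_nonneg_of_nonneg_of_le_pi ha (by linarith))
      (sin_nonneg_of_nonneg_of_le_pi hb (by linarith))
    linarith
  calc tan a + tan b = sin (a + b) / (cos a * cos b) := by
        rw [tan_eq_sin_div_cos, tan_eq_sin_div_cos, sin_add]
        field_simp
    _ ≤ sin (a + b) / cos (a + b) := div_le_div_of_nonneg_left hsab hcab hcos
    _ = tan (a + b) := (tan_eq_sin_div_cos _).symm

theorem sum_tan_le_tan_sum {ι : Type*} (s : Finset ι) (φ : ι → ℝ) (hφ : ∀ i ∈ s, 0 ≤ φ i)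
    (hs : ∑ i ∈ s, φ i < π / 2) :
    ∑ i ∈ s, tan (φ i) ≤ tan (∑ i ∈ s, φ i) := by
  induction s using Finset.cons_induction with
  | empty => simp
  | cons a s has ih =>
    rw [sum_cons] at hs ⊢
    rw [sum_cons]
    have hrest : 0 ≤ ∑ i ∈ s, φ i := sum_nonneg fun i hi => hφ i (mem_cons_of_mem hi)
    have hφa : 0 ≤ φ a := hφ a (mem_cons_self a s)
    calc tan (φ a) + ∑ i ∈ s, tan (φ i) ≤ tan (φ a) + tan (∑ i ∈ s, φ i) := by
          gcongr
          exact ih (fun i hi => hφ i (mem_cons_of_mem hi)) (by linarith)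
      _ ≤ tan (φ a + ∑ i ∈ s, φ i) := tan_add_tan_le_tan_add hφa hrest hs

theorem tan_pi_div_two_sub_arctan (x : ℝ) : tan (π / 2 - arctan x) = x⁻¹ := by
  rw [tan_pi_div_two_sub, tan_arctan]

theorem sum_inv_le_neg_inv_of_sum_arctan_ge {ι : Type*} (s : Finset ι) (x : ι → ℝ) {y : ℝ}
    (hy : y < 0) (h : ((#s : ℝ) - 1) * π / 2 ≤ ∑ i ∈ s, arctan (x i) + arctan y) :
    ∑ i ∈ s, (x i)⁻¹ ≤ -y⁻¹ := by
  set φ : ι → ℝ := fun i => π / 2 - arctan (x i)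
  have hφ : ∀ i ∈ s, 0 ≤ φ i := fun i _ => sub_nonneg.mpr (arctan_lt_pi_div_two (x i)).le
  have hy_arctan : arctan y < 0 := arctan_lt_zero.mpr hy
  have hsum : ∑ i ∈ s, φ i ≤ π / 2 + arctan y := by
    simp only [φ, sum_sub_distrib, sum_const, nsmul_eq_mul]
    linarith
  have hsum_nonneg : 0 ≤ ∑ i ∈ s, φ i := sum_nonneg hφ
  calc ∑ i ∈ s, (x i)⁻¹ = ∑ i ∈ s, tan (φ i) := by simp only [φ, tan_pi_div_two_sub_arctan]
    _ ≤ tan (∑ i ∈ s, φ i) := sum_tan_le_tan_sum s φ hφ (by linarith)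
    _ ≤ tan (π / 2 + arctan y) :=
        strictMonoOn_tan.monotoneOn ⟨by linarith [pi_pos], by linarith⟩
          ⟨by linarith [neg_pi_div_two_lt_arctan y], by linarith⟩ hsum
    _ = -y⁻¹ := by
        rw [← sub_neg_eq_add, ← arctan_neg, tan_pi_div_two_sub_arctan, inv_neg]

end Real

theorem stmt_17 (n : ℕ) (hn : 2 ≤ n) (f : ℝ) (hf : 0 < f)
    (lam : Fin n → ℝ)
    (hsum : ((n : ℝ) - 2) * Real.pi / 2 ≤ ∑ i, Real.arctan (lam i / f))
    (hneg : lam ⟨n - 1, by omega⟩ < 0) :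
    ∑ i ∈ Finset.univ.filter (fun i : Fin n => (i : ℕ) < n - 1), f / lam i ≤
      -f / lam ⟨n - 1, by omega⟩ := by
  set last : Fin n := ⟨n - 1, by omega⟩
  have hfilter : univ.filter (fun i : Fin n => (i : ℕ) < n - 1) = univ.erase last := by
    ext i
    simp only [mem_filter, mem_univ, true_and, mem_erase, ne_eq, Fin.ext_iff, last, and_true]
    have := i.isLt
    omega
  have hcard : ((#(univ.erase last) : ℕ) : ℝ) - 1 = (n : ℝ) - 2 := by
    rw [card_erase_of_mem (mem_univ _), card_univ, Fintype.card_fin, Nat.cast_sub (by omega)]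
    ring
  rw [← add_sum_erase _ _ (mem_univ last), add_comm] at hsum
  have key := sum_inv_le_neg_inv_of_sum_arctan_ge (univ.erase last) (fun i => lam i / f)
    (div_neg_of_neg_of_pos hneg hf) (hcard ▸ hsum)
  simpa only [hfilter, inv_div, neg_div] using key
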